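/- arXiv:2307.02037 — 2 statements merged into one kernel-verified Lean document; each statement's English description precedes it below -/
import Mathlib

section
/- Let ν satisfy a log-Sobolev inequality with constant μ and let f be a smooth, bounded, compactly supported function with ‖∇f‖ ≤ 1 and 𝔼_ν[f] = 0. Then for every λ ≥ 0, 𝔼_ν[e^{λf}] ≤ exp(λ²/(2μ)). -/
open MeasureTheory Real

/-- **Herbst argument: exponential moment bound under a log-Sobolev inequality.**
If `ν` satisfies the log-Sobolev inequality with constant `c`, and `f` is a smooth, bounded,
compactly supported function with `‖∇f‖ ≤ 1` and `𝔼_ν[f] = 0`, then for every `λ ≥ 0`,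
`𝔼_ν[e^{λ f}] ≤ exp (λ² / (2c))`. -/
theorem stmt_4 (d : ℕ) (ν : Measure (EuclideanSpace ℝ (Fin d))) [IsProbabilityMeasure ν]
    (c : ℝ) (hc : 0 < c)
    (hLSI : ∀ g : EuclideanSpace ℝ (Fin d) → ℝ, ContDiff ℝ (⊤ : ℕ∞) g →
      Integrable (fun x => g x ^ 2) ν →
      (∫ x, g x ^ 2 * Real.log (g x ^ 2) ∂ν) -
        (∫ x, g x ^ 2 ∂ν) * Real.log (∫ x, g x ^ 2 ∂ν) ≤
        (2 / c) * ∫ x, ‖gradient g x‖ ^ 2 ∂ν)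
    (f : EuclideanSpace ℝ (Fin d) → ℝ)
    (hsmooth : ContDiff ℝ (⊤ : ℕ∞) f) (hsupp : HasCompactSupport f)
    (hgrad : ∀ x, ‖gradient f x‖ ≤ 1) (hmean : (∫ x, f x ∂ν) = 0)
    (l : ℝ) (hl : 0 ≤ l) :
    (∫ x, Real.exp (l * f x) ∂ν) ≤ Real.exp (l ^ 2 / (2 * c)) := by
  have hνne : NeZero ν := ⟨IsProbabilityMeasure.ne_zero ν⟩
  rcases hl.eq_or_lt with rfl | hl0
  · simp
  obtain ⟨M, hM⟩ := hsupp.exists_bound_of_continuous hsmooth.continuous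
  have hfc : Continuous f := hsmooth.continuous
  -- integrability of exp (t * f)
  have int_exp : ∀ t : ℝ, Integrable (fun x => exp (t * f x)) ν := by
    intro t
    refine (integrable_const (exp (|t| * M))).mono'
      ((continuous_exp.comp (continuous_const.mul hfc)).aestronglyMeasurable) ?_
    filter_upwards with x
    rw [Real.norm_eq_abs, abs_of_pos (exp_pos _), exp_le_exp]
    calc t * f x ≤ |t * f x| := le_abs_self _
      _ = |t| * |f x| := abs_mul _ _
      _ ≤ |t| * M := by
          have := hM x
          rw [Real.norm_eq_abs] at this
          exact mul_le_mul_of_nonneg_left this (abs_nonneg t)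
  set H : ℝ → ℝ := fun t => ∫ x, exp (t * f x) ∂ν with hHdef
  have hM0 : 0 ≤ M := le_trans (norm_nonneg _) (hM 0)
  -- derivative of H
  have hH : ∀ t : ℝ, HasDerivAt H (∫ x, f x * exp (t * f x) ∂ν) t := by
    intro t
    refine (hasDerivAt_integral_of_dominated_loc_of_deriv_le
      (F := fun s x => exp (s * f x)) (F' := fun s x => f x * exp (s * f x))
      (bound := fun _ => M * exp ((|t| + 1) * M)) (Metric.ball_mem_nhds t one_pos) ?_ (int_exp t) ?_ ?_
      (integrable_const _) ?_).2
    · filter_upwards with s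
      exact (continuous_exp.comp (continuous_const.mul hfc)).aestronglyMeasurable
    · exact (hfc.mul (continuous_exp.comp (continuous_const.mul hfc))).aestronglyMeasurable
    · filter_upwards with x s hs
      rw [Real.norm_eq_abs, abs_mul, abs_of_pos (exp_pos _)]
      have h1 : |f x| ≤ M := by have := hM x; rwa [Real.norm_eq_abs] at this
      have h2 : exp (s * f x) ≤ exp ((|t| + 1) * M) := by
        rw [exp_le_exp]
        calc s * f x ≤ |s * f x| := le_abs_self _
          _ = |s| * |f x| := abs_mul _ _
          _ ≤ (|t| + 1) * M := by
              apply mul_le_mul _ h1 (abs_nonneg _) (by positivity)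
              have : |s - t| < 1 := by simpa [Metric.mem_ball, Real.dist_eq] using hs
              calc |s| = |t + (s - t)| := by ring_nf
                _ ≤ |t| + |s - t| := abs_add_le _ _
                _ ≤ |t| + 1 := by linarith
      exact mul_le_mul h1 h2 (exp_pos _).le hM0
    · filter_upwards with x s _
      have : HasDerivAt (fun s : ℝ => s * f x) (f x) s := hasDerivAt_mul_const (f x)
      simpa [mul_comm] using this.exp
  have int_fexp : ∀ t : ℝ, Integrable (fun x => f x * exp (t * f x)) ν := by
    intro t
    refine (hasDerivAt_integral_of_dominated_loc_of_deriv_le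
      (F := fun s x => exp (s * f x)) (F' := fun s x => f x * exp (s * f x))
      (bound := fun _ => M * exp ((|t| + 1) * M)) (Metric.ball_mem_nhds t one_pos) ?_ (int_exp t) ?_ ?_
      (integrable_const _) ?_).1
    · filter_upwards with s
      exact (continuous_exp.comp (continuous_const.mul hfc)).aestronglyMeasurable
    · exact (hfc.mul (continuous_exp.comp (continuous_const.mul hfc))).aestronglyMeasurable
    · filter_upwards with x s hs
      rw [Real.norm_eq_abs, abs_mul, abs_of_pos (exp_pos _)]
      have h1 : |f x| ≤ M := by have := hM x; rwa [Real.norm_eq_abs] at this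
      have h2 : exp (s * f x) ≤ exp ((|t| + 1) * M) := by
        rw [exp_le_exp]
        calc s * f x ≤ |s * f x| := le_abs_self _
          _ = |s| * |f x| := abs_mul _ _
          _ ≤ (|t| + 1) * M := by
              apply mul_le_mul _ h1 (abs_nonneg _) (by positivity)
              have : |s - t| < 1 := by simpa [Metric.mem_ball, Real.dist_eq] using hs
              calc |s| = |t + (s - t)| := by ring_nf
                _ ≤ |t| + |s - t| := abs_add_le _ _
                _ ≤ |t| + 1 := by linarith
      exact mul_le_mul h1 h2 (exp_pos _).le hM0
    · filter_upwards with x s _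
      have : HasDerivAt (fun s : ℝ => s * f x) (f x) s := hasDerivAt_mul_const (f x)
      simpa [mul_comm] using this.exp
  have hHpos : ∀ t : ℝ, 0 < H t := fun t => integral_exp_pos (int_exp t)
  have H0 : H 0 = 1 := by simp [hHdef]
  -- norm of gradient equals norm of fderiv
  have norm_grad : ∀ (h : EuclideanSpace ℝ (Fin d) → ℝ) (x), ‖gradient h x‖ = ‖fderiv ℝ h x‖ := by
    intro h x
    show ‖(InnerProductSpace.toDual ℝ _).symm (fderiv ℝ h x)‖ = _
    exact LinearIsometryEquiv.norm_map _ _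
  -- The Herbst differential inequality
  have herbst : ∀ t : ℝ,
      t * (∫ x, f x * exp (t * f x) ∂ν) - H t * Real.log (H t) ≤ t ^ 2 / (2 * c) * H t := by
    intro t
    set g : EuclideanSpace ℝ (Fin d) → ℝ := fun x => exp (t / 2 * f x) with hgdef
    have hg2 : ∀ x, g x ^ 2 = exp (t * f x) := by
      intro x
      rw [hgdef, sq, ← exp_add]
      ring_nf
    have hgC : ContDiff ℝ (⊤ : ℕ∞) g := Real.contDiff_exp.comp (contDiff_const.mul hsmooth)
    have hgint : Integrable (fun x => g x ^ 2) ν := by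
      simpa only [hg2] using int_exp t
    have key := hLSI g hgC hgint
    -- rewrite left side
    have e1 : (∫ x, g x ^ 2 * Real.log (g x ^ 2) ∂ν) = t * ∫ x, f x * exp (t * f x) ∂ν := by
      rw [← integral_const_mul]
      congr 1
      funext x
      rw [hg2, Real.log_exp]
      ring
    have e2 : (∫ x, g x ^ 2 ∂ν) = H t := by
      simp only [hg2]
      rfl
    -- gradient bound
    have hfderiv : ∀ x, HasFDerivAt g (exp (t / 2 * f x) • ((t / 2) • fderiv ℝ f x)) x := by
      intro x
      have h1 : HasFDerivAt (fun y => t / 2 * f y) ((t / 2) • fderiv ℝ f x) x :=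
        ((hsmooth.differentiable (by simp) x).hasFDerivAt).const_mul (t / 2)
      exact (Real.hasDerivAt_exp (t / 2 * f x)).comp_hasFDerivAt x h1
    have hgbound : ∀ x, ‖gradient g x‖ ^ 2 ≤ t ^ 2 / 4 * exp (t * f x) := by
      intro x
      rw [norm_grad g x, (hfderiv x).fderiv]
      have hff : ‖fderiv ℝ f x‖ ≤ 1 := by rw [← norm_grad f x]; exact hgrad x
      rw [norm_smul, norm_smul, Real.norm_eq_abs, Real.norm_eq_abs, abs_of_pos (exp_pos _)]
      have h4 : ‖fderiv ℝ f x‖ ^ 2 ≤ 1 := by nlinarith [norm_nonneg (fderiv ℝ f x)]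
      have h3 : (exp (t / 2 * f x) * (|t / 2| * ‖fderiv ℝ f x‖)) ^ 2
          ≤ (exp (t / 2 * f x)) ^ 2 * (t / 2) ^ 2 := by
        have h5 : (|t / 2| * ‖fderiv ℝ f x‖) ^ 2 ≤ (t / 2) ^ 2 := by
          rw [mul_pow, sq_abs]
          exact mul_le_of_le_one_right (sq_nonneg _) h4
        rw [mul_pow]
        exact mul_le_mul_of_nonneg_left h5 (sq_nonneg _)
      calc (exp (t / 2 * f x) * (|t / 2| * ‖fderiv ℝ f x‖)) ^ 2
          ≤ (exp (t / 2 * f x)) ^ 2 * (t / 2) ^ 2 := h3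
        _ = t ^ 2 / 4 * exp (t * f x) := by
            rw [sq, ← exp_add]
            ring_nf
    have hgradcont : Continuous fun x => ‖gradient g x‖ ^ 2 := by
      have h1 : Continuous (fderiv ℝ g) := hgC.continuous_fderiv (by simp)
      have h2 : Continuous fun x => gradient g x :=
        (InnerProductSpace.toDual ℝ _).symm.continuous.comp h1
      exact (h2.norm).pow 2
    have hgradint : Integrable (fun x => ‖gradient g x‖ ^ 2) ν := by
      refine ((int_exp t).const_mul (t ^ 2 / 4)).mono' hgradcont.aestronglyMeasurable ?_
      filter_upwards with x
      rw [Real.norm_eq_abs, abs_of_nonneg (by positivity)]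
      exact hgbound x
    have e3 : (∫ x, ‖gradient g x‖ ^ 2 ∂ν) ≤ t ^ 2 / 4 * H t := by
      calc (∫ x, ‖gradient g x‖ ^ 2 ∂ν) ≤ ∫ x, t ^ 2 / 4 * exp (t * f x) ∂ν :=
            integral_mono hgradint ((int_exp t).const_mul _) hgbound
        _ = t ^ 2 / 4 * H t := integral_const_mul _ _
    rw [e1, e2] at key
    calc t * (∫ x, f x * exp (t * f x) ∂ν) - H t * Real.log (H t)
        ≤ (2 / c) * ∫ x, ‖gradient g x‖ ^ 2 ∂ν := key
      _ ≤ (2 / c) * (t ^ 2 / 4 * H t) := by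
          apply mul_le_mul_of_nonneg_left e3 (by positivity)
      _ = t ^ 2 / (2 * c) * H t := by field_simp; ring
  -- the function φ
  set φ : ℝ → ℝ := fun t => t ^ 2 / (2 * c) - Real.log (H t) with hφdef
  have hφ : ∀ t : ℝ, HasDerivAt φ (t / c - (∫ x, f x * exp (t * f x) ∂ν) / H t) t := by
    intro t
    have h1 : HasDerivAt (fun t : ℝ => t ^ 2 / (2 * c)) (t / c) t := by
      have := (hasDerivAt_pow 2 t).div_const (2 * c)
      refine this.congr_deriv ?_
      field_simp
      ring
    exact h1.sub ((hH t).log (hHpos t).ne')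
  have φ0 : φ 0 = 0 := by simp [hφdef, H0]
  have hD0 : HasDerivAt φ 0 0 := by
    have := hφ 0
    have e : (0 : ℝ) / c - (∫ x, f x * exp (0 * f x) ∂ν) / H 0 = 0 := by
      simp [H0]
      simpa using hmean
    rwa [e] at this
  -- ψ = φ t / t is monotone on (0, ∞)
  have hψ : ∀ t : ℝ, 0 < t → HasDerivAt (fun t => φ t / t)
      (((t / c - (∫ x, f x * exp (t * f x) ∂ν) / H t) * t - φ t * 1) / t ^ 2) t := by
    intro t ht
    exact (hφ t).div (hasDerivAt_id t) ht.ne'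
  have hψnn : ∀ t : ℝ, 0 < t →
      0 ≤ ((t / c - (∫ x, f x * exp (t * f x) ∂ν) / H t) * t - φ t * 1) / t ^ 2 := by
    intro t ht
    apply div_nonneg _ (sq_nonneg t)
    have hHt := hHpos t
    have hb := herbst t
    -- t H' / H ≤ t²/(2c) + log H
    have hdiv : t * (∫ x, f x * exp (t * f x) ∂ν) / H t
        ≤ t ^ 2 / (2 * c) + Real.log (H t) := by
      rw [div_le_iff₀ hHt]
      nlinarith [hb]
    have : φ t = t ^ 2 / (2 * c) - Real.log (H t) := rfl
    rw [this]
    have expand : (t / c - (∫ x, f x * exp (t * f x) ∂ν) / H t) * t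
        - (t ^ 2 / (2 * c) - Real.log (H t)) * 1
        = t ^ 2 / (2 * c) - (t * (∫ x, f x * exp (t * f x) ∂ν) / H t - Real.log (H t)) := by
      field_simp
      ring
    rw [expand]
    linarith
  have hmono : MonotoneOn (fun t => φ t / t) (Set.Ioi (0 : ℝ)) := by
    apply monotoneOn_of_deriv_nonneg (convex_Ioi 0)
    · intro t ht
      exact ((hψ t ht).differentiableAt).continuousAt.continuousWithinAt
    · rw [interior_Ioi]
      intro t ht
      exact ((hψ t ht).differentiableAt).differentiableWithinAt
    · rw [interior_Ioi]
      intro t ht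
      rw [(hψ t ht).deriv]
      exact hψnn t ht
  -- limit of ψ at 0⁺ is 0
  have hlim : Filter.Tendsto (fun t => φ t / t) (nhdsWithin 0 (Set.Ioi 0)) (nhds 0) := by
    have h1 := hasDerivAt_iff_tendsto_slope.mp hD0
    have h2 : Filter.Tendsto (slope φ 0) (nhdsWithin 0 (Set.Ioi 0)) (nhds 0) :=
      h1.mono_left (nhdsWithin_mono 0 (fun x hx => ne_of_gt hx))
    refine h2.congr ?_
    intro t
    rw [slope_def_field, φ0]
    simp [div_eq_mul_inv]
  have hψl : (0 : ℝ) ≤ φ l / l := by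
    refine le_of_tendsto hlim ?_
    filter_upwards [Ioo_mem_nhdsGT_of_mem (Set.mem_Ico.mpr ⟨le_refl (0:ℝ), hl0⟩)] with t ht
    exact hmono ht.1 (Set.mem_Ioi.mpr hl0) ht.2.le
  have hφl : 0 ≤ φ l := by
    have h := mul_nonneg hψl hl
    rwa [div_mul_cancel₀ _ hl0.ne'] at h
  have hfin : Real.log (H l) ≤ l ^ 2 / (2 * c) := by
    have he : φ l = l ^ 2 / (2 * c) - Real.log (H l) := rfl
    rw [he] at hφl
    linarith
  exact (Real.log_le_iff_le_exp (hHpos l)).mp hfin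
end

section
/- Let f*(x) = (‖x‖² + 1)^a for a ∈ (0, 1/2), viewed as a function on ℝ. For any r > 0, if |x| ≥ r^{−1/(2−2a)}, then f*(x) + r x² is convex at x, i.e., its second derivative is nonnegative. Consequently f* satisfies: for every r > 0, f*(x) + r‖x‖² is convex for ‖x‖ ≥ R(r) with R(r) = r^{−1/(2−2a)}. -/
/-!
The second derivative of `(x² + 1)^a + r x²` is `2a(x² + 1)^(a-2)((2a - 1)x² + 1) + 2r`. Its only
negative part is `-2a(1 - 2a) x²(x² + 1)^(a-2)`, and `x²(x² + 1)^(a-2) ≤ |x|^(2a-2) ≤ r` as soon as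
`|x| ≥ r^(-1/(2-2a))`; since `a(1 - 2a) ≤ 1`, the term `2r` absorbs it.
-/

open Real

lemma hasDerivAt_rpow_sq_add_one (a x : ℝ) :
    HasDerivAt (fun y : ℝ => (y ^ 2 + 1) ^ a) (2 * a * x * (x ^ 2 + 1) ^ (a - 1)) x := by
  have hbase : HasDerivAt (fun y : ℝ => y ^ 2 + 1) (2 * x) x := by
    simpa using (hasDerivAt_pow 2 x).add_const 1
  exact (hbase.rpow_const (p := a) (Or.inl (by positivity))).congr_deriv (by ring)

lemma hasDerivAt_deriv_rpow_sq_add_one (a x : ℝ) :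
    HasDerivAt (fun y : ℝ => 2 * a * y * (y ^ 2 + 1) ^ (a - 1))
      (2 * a * (x ^ 2 + 1) ^ (a - 2) * ((2 * a - 1) * x ^ 2 + 1)) x := by
  have hpow := hasDerivAt_rpow_sq_add_one (a - 1) x
  have hsplit : (x ^ 2 + 1) ^ (a - 1) = (x ^ 2 + 1) ^ (a - 2) * (x ^ 2 + 1) := by
    rw [← rpow_add_one (by positivity)]
    ring_nf
  refine (((hasDerivAt_id x).const_mul (2 * a)).mul hpow).congr_deriv ?_
  rw [hsplit, show a - 1 - 1 = a - 2 by ring, id_eq]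
  ring

lemma deriv_deriv_rpow_sq_add_one_add_mul_sq (a r x : ℝ) :
    deriv (deriv fun y : ℝ => (y ^ 2 + 1) ^ a + r * y ^ 2) x
      = 2 * a * (x ^ 2 + 1) ^ (a - 2) * ((2 * a - 1) * x ^ 2 + 1) + 2 * r := by
  have hderiv : deriv (fun y : ℝ => (y ^ 2 + 1) ^ a + r * y ^ 2)
      = fun y => 2 * a * y * (y ^ 2 + 1) ^ (a - 1) + r * (2 * y) := by
    funext y
    exact ((hasDerivAt_rpow_sq_add_one a y).add
      (by simpa using (hasDerivAt_pow 2 y).const_mul r)).deriv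
  rw [hderiv]
  have hlin : HasDerivAt (fun y : ℝ => r * (2 * y)) (2 * r) x := by
    simpa [mul_comm] using ((hasDerivAt_id x).const_mul 2).const_mul r
  exact ((hasDerivAt_deriv_rpow_sq_add_one a x).add hlin).deriv

lemma sq_mul_rpow_sq_add_one_le (a x : ℝ) (ha : a ≤ 2) (hx : x ≠ 0) :
    x ^ 2 * (x ^ 2 + 1) ^ (a - 2) ≤ (x ^ 2) ^ (a - 1) := by
  have hx2 : 0 < x ^ 2 := by positivity
  calc x ^ 2 * (x ^ 2 + 1) ^ (a - 2) ≤ x ^ 2 * (x ^ 2) ^ (a - 2) :=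
        mul_le_mul_of_nonneg_left
          (rpow_le_rpow_of_nonpos hx2 (by linarith) (by linarith)) hx2.le
    _ = (x ^ 2) ^ (a - 1) := by
        rw [mul_comm, ← rpow_add_one hx2.ne']
        ring_nf

lemma sq_rpow_le_of_rpow_le_abs (a r x : ℝ) (ha : a < 1) (hr : 0 < r)
    (hx : r ^ (-(1 / (2 - 2 * a))) ≤ |x|) : (x ^ 2) ^ (a - 1) ≤ r := by
  have hR : 0 < r ^ (-(1 / (2 - 2 * a))) := rpow_pos_of_pos hr _
  have hexp : -(1 / (2 - 2 * a)) * (2 * (a - 1)) = 1 := by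
    have : 1 - a ≠ 0 := by linarith
    field_simp
    ring
  calc (x ^ 2) ^ (a - 1) = |x| ^ (2 * (a - 1)) := by
        rw [← sq_abs x, ← rpow_natCast, ← rpow_mul (abs_nonneg x)]
        norm_num
    _ ≤ (r ^ (-(1 / (2 - 2 * a)))) ^ (2 * (a - 1)) :=
        rpow_le_rpow_of_nonpos hR hx (by linarith)
    _ = r := by rw [← rpow_mul hr.le, hexp, rpow_one]

/-- **Sub-linear tail potentials are convex outside a ball after quadratic regularization.**
Let `f*(x) = (x² + 1)^a` for `a ∈ (0, 1/2)`.  For any `r > 0`, if `|x| ≥ r^{-1/(2-2a)}`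
then `f*(x) + r x²` has nonnegative second derivative at `x`; i.e. `f* + r ‖·‖²` is convex
outside the ball of radius `R(r) = r^{-1/(2-2a)}`. -/
theorem stmt_10 (a : ℝ) (ha : 0 < a) (ha2 : a < 1 / 2) (r : ℝ) (hr : 0 < r)
    (x : ℝ) (hx : r ^ (-(1 / (2 - 2 * a))) ≤ |x|) :
    0 ≤ deriv (deriv (fun y : ℝ => (y ^ 2 + 1) ^ a + r * y ^ 2)) x := by
  have hx0 : x ≠ 0 := abs_pos.mp ((rpow_pos_of_pos hr _).trans_le hx)
  have hbound : x ^ 2 * (x ^ 2 + 1) ^ (a - 2) ≤ r :=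
    (sq_mul_rpow_sq_add_one_le a x (by linarith) hx0).trans
      (sq_rpow_le_of_rpow_le_abs a r x (by linarith) hr hx)
  have hpos : 0 ≤ (x ^ 2 + 1) ^ (a - 2) := by positivity
  rw [deriv_deriv_rpow_sq_add_one_add_mul_sq]
  have hcoef : 0 ≤ a * (1 - 2 * a) := mul_nonneg ha.le (by linarith)
  have hcoef_le : a * (1 - 2 * a) ≤ 1 := by nlinarith
  nlinarith [mul_nonneg ha.le hpos, mul_le_mul_of_nonneg_left hbound hcoef,
    mul_le_mul_of_nonneg_right hcoef_le hr.le]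
end
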